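/- Let T = ⟨π_1, π_2, …, π_h⟩ be a tangle (a sequence of permutations of [n] in which consecutive permutations are adjacent), and let L(T) = (l_{ij}) where l_{ij} counts the number of indices t < h such that π_t and π_{t+1} differ in the swap (i,j). Then π_1 L(T) = π_h, where for a permutation π and list L = (l_{ij}), the map πL sends i to π(i) + |{j : π(i) < π(j) ≤ n and l_{ij} odd}| − |{j : 1 ≤ π(j) < π(i) and l_{ij} odd}|. -/

import Mathlib

/-!
Between adjacent permutations every wire moves by at most one position, so wires `i ≠ j` are
swapped in a step exactly when their relative order changes in that step. Hence `l i j` is odd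
iff the order of `i` and `j` in `π_h` differs from that in `π_1`. As `π i` counts the `j` with
`π j < π i`, `π_h i` is `π_1 i` plus the wires above `i` in `π_1` with `l i j` odd (they end
below `i`) minus the wires below `i` in `π_1` with `l i j` odd.
-/

open Finset

/-- Two permutations are adjacent if every element's position changes by at most one. -/
def Adjacent {n : ℕ} (π σ : Equiv.Perm (Fin n)) : Prop :=
  ∀ i, ((π i : ℤ) - (σ i : ℤ)).natAbs ≤ 1

/-- Number of times wires `i` and `j` swap in the sequence `T` of height `h`. -/
def SwapCount {n : ℕ} (T : ℕ → Equiv.Perm (Fin n)) (h : ℕ) (i j : Fin n) : ℕ :=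
  ((Finset.range (h - 1)).filter fun t => T t i = T (t+1) j ∧ T t j = T (t+1) i).card

/-- A tangle of height `h`: a nonempty sequence of permutations with consecutive ones adjacent. -/
def IsTangle {n : ℕ} (T : ℕ → Equiv.Perm (Fin n)) (h : ℕ) : Prop :=
  1 ≤ h ∧ ∀ t, t + 1 < h → Adjacent (T t) (T (t+1))

/-- A tangle starting at the identity realizing the list `l`. -/
def Realizes {n : ℕ} (T : ℕ → Equiv.Perm (Fin n)) (h : ℕ) (l : Fin n → Fin n → ℕ) : Prop :=
  IsTangle T h ∧ T 0 = 1 ∧ ∀ i j, i ≠ j → SwapCount T h i j = l i j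

/-- A list is feasible if some tangle starting at the identity realizes it. -/
def Feasible {n : ℕ} (l : Fin n → Fin n → ℕ) : Prop :=
  ∃ h T, Realizes T h l

/-- A list is consistent if the map `id_n L` is a permutation of `[n]`. -/
def Consistent {n : ℕ} (l : Fin n → Fin n → ℕ) : Prop :=
  ∃ ρ : Equiv.Perm (Fin n), ∀ i : Fin n,
    ((i : ℤ) + ((Finset.univ.filter fun j => i < j ∧ Odd (l i j)).card : ℤ)
      - ((Finset.univ.filter fun j => j < i ∧ Odd (l i j)).card : ℤ)) = (ρ i : ℤ)

lemma odd_card_filter_range_not_iff_succ (p : ℕ → Prop) [DecidablePred p] (m : ℕ) :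
    Odd #{t ∈ range m | ¬(p t ↔ p (t + 1))} ↔ ¬(p 0 ↔ p m) := by
  induction m with
  | zero => simp
  | succ m ih =>
    rw [range_add_one, filter_insert]
    by_cases hm : p m ↔ p (m + 1)
    · rw [if_neg (not_not.2 hm), ih, hm]
    · rw [if_pos hm, card_insert_of_notMem (by simp), Nat.odd_add_one, ih]
      tauto

lemma Adjacent.swap_iff {n : ℕ} {π σ : Equiv.Perm (Fin n)} (hadj : Adjacent π σ)
    {i j : Fin n} (hij : i ≠ j) :
    (π i = σ j ∧ π j = σ i) ↔ ¬(π i < π j ↔ σ i < σ j) := by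
  have hi := hadj i
  have hj := hadj j
  have hπ : (π i : ℕ) ≠ π j := Fin.val_ne_of_ne (π.injective.ne hij)
  have hσ : (σ i : ℕ) ≠ σ j := Fin.val_ne_of_ne (σ.injective.ne hij)
  simp only [Fin.ext_iff, Fin.lt_def]
  omega

lemma IsTangle.odd_swapCount_iff {n h : ℕ} {T : ℕ → Equiv.Perm (Fin n)} (hT : IsTangle T h)
    {i j : Fin n} (hij : i ≠ j) :
    Odd (SwapCount T h i j) ↔ ¬(T 0 i < T 0 j ↔ T (h - 1) i < T (h - 1) j) := by
  rw [SwapCount, filter_congr fun t ht => (hT.2 t (by grind)).swap_iff hij]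
  exact odd_card_filter_range_not_iff_succ (fun t => T t i < T t j) (h - 1)

lemma Equiv.Perm.card_filter_apply_lt {n : ℕ} (π : Equiv.Perm (Fin n)) (i : Fin n) :
    #{j | π j < π i} = π i := by
  rw [← Fin.card_Iio (π i)]
  exact card_equiv π (by simp)

lemma ite_add_ite_and_sub_ite_and {α : Type*} [LinearOrder α] {a b a' b' : α}
    (hab : a ≠ b) (hab' : a' ≠ b') {o : Prop} [Decidable o]
    (ho : o ↔ ¬(a < b ↔ a' < b')) :
    ((if b < a then 1 else 0) + (if a < b ∧ o then 1 else 0)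
      - (if b < a ∧ o then 1 else 0) : ℤ) = if b' < a' then 1 else 0 := by
  rcases hab.lt_or_gt with h | h <;> rcases hab'.lt_or_gt with h' | h' <;>
    simp [h, h', h.not_gt, h'.not_gt, ho]

/-- For every tangle T = ⟨π₁,…,π_h⟩ we have π₁ L(T) = π_h. -/
theorem first_apply_list_eq_last (n h : ℕ) (T : ℕ → Equiv.Perm (Fin n))
    (hT : IsTangle T h) (i : Fin n) :
    ((T 0 i : ℤ)
      + ((Finset.univ.filter fun j => T 0 i < T 0 j ∧ Odd (SwapCount T h i j)).card : ℤ)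
      - ((Finset.univ.filter fun j => T 0 j < T 0 i ∧ Odd (SwapCount T h i j)).card : ℤ))
      = (T (h - 1) i : ℤ) := by
  simp only [← (T 0).card_filter_apply_lt, ← (T (h - 1)).card_filter_apply_lt,
    natCast_card_filter, ← sum_add_distrib, ← sum_sub_distrib]
  refine sum_congr rfl fun j _ => ?_
  rcases eq_or_ne i j with rfl | hij
  · simp
  · exact ite_add_ite_and_sub_ite_and ((T 0).injective.ne hij) ((T (h - 1)).injective.ne hij)
      (hT.odd_swapCount_iff hij)
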